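/- On ℝ³ with coordinates v = (v₀, v₁, v₂), let Δ(v) := v₁² − 2v₀v₂, and for real numbers t₁ < t₂ let B_{t₁,t₂}(v) := v₂ − ((t₁+t₂)/2)·v₁ + (t₁t₂/2)·v₀. Let t₁ < t₂ and s₁ < s₂ with (t₁,t₂) ≠ (s₁,s₂). Then the restriction of Δ to the line Ker B_{t₁,t₂} ∩ Ker B_{s₁,s₂} is negative definite if and only if t₁ < s₁ < t₂ < s₂ or s₁ < t₁ < s₂ < t₂. -/
import Mathlib


/-- The discriminant `Δ(v) = v₁² − 2·v₀·v₂` on `ℝ³`. -/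
def Delta3 (v : ℝ × ℝ × ℝ) : ℝ := v.2.1 ^ 2 - 2 * v.1 * v.2.2

/-- The linear functional `B_{t₁,t₂}(v) = v₂ − ((t₁+t₂)/2)·v₁ + (t₁t₂/2)·v₀` on `ℝ³`. -/
noncomputable def Bq (t₁ t₂ : ℝ) (v : ℝ × ℝ × ℝ) : ℝ :=
  v.2.2 - (t₁ + t₂) / 2 * v.2.1 + t₁ * t₂ / 2 * v.1

lemma interl (t₁ t₂ s₁ s₂ : ℝ) (ht : t₁ < t₂) (hs : s₁ < s₂) :
    (t₁ - s₁) * (t₁ - s₂) * (t₂ - s₁) * (t₂ - s₂) < 0 ↔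
      ((t₁ < s₁ ∧ s₁ < t₂ ∧ t₂ < s₂) ∨ (s₁ < t₁ ∧ t₁ < s₂ ∧ s₂ < t₂)) := by
  constructor
  · intro hP
    rcases lt_trichotomy t₁ s₁ with h1 | h1 | h1
    · left
      refine ⟨h1, ?_, ?_⟩
      · by_contra hc; push_neg at hc
        nlinarith [mul_pos (sub_pos.2 h1) (sub_pos.2 (h1.trans hs)),
          mul_nonneg (sub_nonneg.2 hc) (sub_nonneg.2 (hc.trans hs.le))]
      · by_contra hc; push_neg at hc
        nlinarith [mul_pos (sub_pos.2 h1) (sub_pos.2 (h1.trans hs)),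
          mul_nonneg (sub_nonneg.2 (hs.le.trans hc)) (sub_nonneg.2 hc)]
    · exfalso; subst h1; nlinarith
    · right
      refine ⟨h1, ?_, ?_⟩
      · by_contra hc; push_neg at hc
        nlinarith [mul_nonneg (sub_nonneg.2 h1.le) (sub_nonneg.2 hc),
          mul_pos (sub_pos.2 (h1.trans ht)) (sub_pos.2 (lt_of_le_of_lt hc ht))]
      · by_contra hc; push_neg at hc
        nlinarith [mul_pos (sub_pos.2 h1) (sub_pos.2 (h1.trans ht)),
          mul_nonneg (sub_nonneg.2 (ht.le.trans hc)) (sub_nonneg.2 hc)]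
  · rintro (⟨h1, h2, h3⟩ | ⟨h1, h2, h3⟩)
    · nlinarith [mul_pos (mul_pos (mul_pos (sub_pos.2 h1) (sub_pos.2 (h1.trans h2)))
        (sub_pos.2 h2)) (sub_pos.2 h3)]
    · nlinarith [mul_pos (mul_pos (mul_pos (sub_pos.2 h1) (sub_pos.2 h2))
        (sub_pos.2 (h1.trans h2))) (sub_pos.2 h3)]

theorem stmt16 (t₁ t₂ s₁ s₂ : ℝ) (ht : t₁ < t₂) (hs : s₁ < s₂)
    (hne : (t₁, t₂) ≠ (s₁, s₂)) :
    (∀ v : ℝ × ℝ × ℝ, Bq t₁ t₂ v = 0 → Bq s₁ s₂ v = 0 → v ≠ 0 → Delta3 v < 0) ↔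
      ((t₁ < s₁ ∧ s₁ < t₂ ∧ t₂ < s₂) ∨ (s₁ < t₁ ∧ t₁ < s₂ ∧ s₂ < t₂)) := by
  rw [← interl t₁ t₂ s₁ s₂ ht hs]
  constructor
  · intro h
    -- the sums must differ
    have hσ : t₁ + t₂ ≠ s₁ + s₂ := by
      intro heq
      have h4 := h (0, 2, t₁ + t₂) (by simp only [Bq]; ring)
        (by simp only [Bq]; linear_combination heq) (by simp)
      simp only [Delta3] at h4
      norm_num at h4
    set a : ℝ := (t₁ + t₂) - (s₁ + s₂) with ha
    set b : ℝ := t₁ * t₂ - s₁ * s₂ with hb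
    have ha0 : a ≠ 0 := sub_ne_zero.2 hσ
    have h4 := h (a, b, ((t₁ + t₂) * b - t₁ * t₂ * a) / 2)
      (by simp only [Bq]; ring) (by simp only [Bq, ha, hb]; ring)
      (by simp [Prod.ext_iff]; intro h'; exact absurd h' ha0)
    have hD : Delta3 (a, b, ((t₁ + t₂) * b - t₁ * t₂ * a) / 2)
        = (t₁ - s₁) * (t₁ - s₂) * (t₂ - s₁) * (t₂ - s₂) := by
      simp only [Delta3, ha, hb]; ring
    linarith [hD ▸ h4]
  · intro hP v hBt hBs hv
    obtain ⟨a, b, c⟩ := v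
    simp only [Bq] at hBt hBs
    have ht' : Delta3 (a, b, c) = (b - t₁ * a) * (b - t₂ * a) := by
      simp only [Delta3]; linear_combination (-2 * a) * hBt
    have hs' : Delta3 (a, b, c) = (b - s₁ * a) * (b - s₂ * a) := by
      simp only [Delta3]; linear_combination (-2 * a) * hBs
    have hσ : t₁ + t₂ ≠ s₁ + s₂ := by
      rcases (interl t₁ t₂ s₁ s₂ ht hs).1 hP with ⟨h1, h2, h3⟩ | ⟨h1, h2, h3⟩ <;>
        intro heq <;> linarith
    by_cases haz : a = 0
    · subst haz
      have hb0 : b = 0 := by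
        have h2 : ((t₁ + t₂) - (s₁ + s₂)) * b = 0 := by linear_combination 2 * hBs - 2 * hBt
        rcases mul_eq_zero.1 h2 with h' | h'
        · exact absurd (by linarith) hσ
        · exact h'
      subst hb0
      have hc0 : c = 0 := by linarith [hBt]
      exact absurd (by simp [hc0]) hv
    · have key : ((t₁ + t₂) - (s₁ + s₂)) * b = (t₁ * t₂ - s₁ * s₂) * a := by
        have heq := ht'.symm.trans hs'
        have h2 : a * (((t₁ + t₂) - (s₁ + s₂)) * b - (t₁ * t₂ - s₁ * s₂) * a) = 0 := by
          nlinarith [heq]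
        have h3 := (mul_eq_zero.1 h2).resolve_left haz
        linarith
      set A : ℝ := (t₁ + t₂) - (s₁ + s₂) with hA
      set B : ℝ := t₁ * t₂ - s₁ * s₂ with hB
      have hAne : A ≠ 0 := sub_ne_zero.2 hσ
      have hDA : Delta3 (a, b, c) * A ^ 2 =
          a ^ 2 * ((t₁ - s₁) * (t₁ - s₂) * (t₂ - s₁) * (t₂ - s₂)) := by
        calc Delta3 (a, b, c) * A ^ 2 = (A * b - t₁ * a * A) * (A * b - t₂ * a * A) := by
              rw [ht']; ring
          _ = (B * a - t₁ * a * A) * (B * a - t₂ * a * A) := by rw [key]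
          _ = a ^ 2 * ((B - t₁ * A) * (B - t₂ * A)) := by ring
          _ = a ^ 2 * ((t₁ - s₁) * (t₁ - s₂) * (t₂ - s₁) * (t₂ - s₂)) := by
              simp only [hA, hB]; ring
      have hA2 : (0:ℝ) < A ^ 2 := by positivity
      have ha2 : (0:ℝ) < a ^ 2 := by positivity
      nlinarith [hDA, mul_pos ha2 (neg_pos.2 hP)]
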